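/- Under the setting of the line-search least-squares method, with s = y + τw and ‖y‖ = 1, the identity (τ - 1)(‖(A - θI)Vy‖² - ‖(A - θI)Vs‖²/‖s‖²) = ‖(A - θI)Vs‖²(1 - 1/‖s‖²) holds. -/

import Mathlib

open Matrix
open scoped ComplexConjugate

/-- Squared Euclidean norm of a complex vector. -/
noncomputable def nsq {k : ℕ} (x : Fin k → ℂ) : ℝ := ∑ i, ‖x i‖ ^ 2

/-- Standard Hermitian inner product (conjugate-linear in the first argument). -/
noncomputable def cip {k : ℕ} (x y : Fin k → ℂ) : ℂ := ∑ i, conj (x i) * y i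

/-- Orthogonal projection `(I - yy*) v`. -/
noncomputable def proj {k : ℕ} (y v : Fin k → ℂ) : Fin k → ℂ := v - cip y v • y

/-! Write `C = (A - θI)V`. Since `w ⊥ y` and `‖y‖ = 1`, along the line `t ↦ y + t w` the
numerator `‖C(y + t w)‖²` and the denominator `‖y + t w‖²` are the quadratics
`α + 2βt + γt²` and `1 + νt²`, where pairing the normal equations with `w` gives `β = -γ`.
The Rayleigh quotient is minimal at `τ`, so its derivative vanishes there:
`(β + γτ)‖s‖² = ‖Cs‖² ντ`, and with `β = -γ` the claimed identity is this relation rearranged. -/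

lemma eq_zero_of_forall_quadratic_nonneg {a b : ℝ} (h : ∀ x, 0 ≤ a * x ^ 2 + b * x) : b = 0 := by
  have hmin : IsLocalMin (fun x => a * x ^ 2 + b * x) 0 :=
    Filter.Eventually.of_forall fun x => by simpa using h x
  have hderiv : HasDerivAt (fun x : ℝ => a * x ^ 2 + b * x) b 0 := by
    simpa using
      ((hasDerivAt_pow 2 (0 : ℝ)).const_mul a).fun_add ((hasDerivAt_id' (0 : ℝ)).const_mul b)
  exact hmin.hasDerivAt_eq_zero hderiv

lemma rayleigh_quotient_line_stationary {α β γ ν τ : ℝ} (hν : 0 ≤ ν)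
    (hmin : ∀ t : ℝ, (α + 2 * β * τ + γ * τ ^ 2) / (1 + ν * τ ^ 2)
      ≤ (α + 2 * β * t + γ * t ^ 2) / (1 + ν * t ^ 2)) :
    (β + γ * τ) * (1 + ν * τ ^ 2) = (α + 2 * β * τ + γ * τ ^ 2) * (ν * τ) := by
  set N := α + 2 * β * τ + γ * τ ^ 2
  set D := 1 + ν * τ ^ 2
  suffices hL : 2 * ((β + γ * τ) * D - N * (ν * τ)) = 0 by linarith
  -- cross-multiplied at `t = τ + h`, the minimality is a quadratic inequality in `h`
  refine eq_zero_of_forall_quadratic_nonneg (a := γ * D - N * ν) fun h => ?_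
  have hle := (div_le_div_iff₀ (by positivity) (by positivity)).mp (hmin (τ + h))
  linear_combination hle

lemma rayleigh_quotient_line_identity {α β γ ν τ : ℝ} (hβ : β = -γ) (hν : 0 ≤ ν)
    (hmin : ∀ t : ℝ, (α + 2 * β * τ + γ * τ ^ 2) / (1 + ν * τ ^ 2)
      ≤ (α + 2 * β * t + γ * t ^ 2) / (1 + ν * t ^ 2)) :
    (τ - 1) * (α - (α + 2 * β * τ + γ * τ ^ 2) / (1 + ν * τ ^ 2))
      = (α + 2 * β * τ + γ * τ ^ 2) * (1 - 1 / (1 + ν * τ ^ 2)) := by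
  have hstat := rayleigh_quotient_line_stationary hν hmin
  have hd : 1 + ν * τ ^ 2 ≠ 0 := by positivity
  generalize hN : α + 2 * β * τ + γ * τ ^ 2 = N at hstat ⊢
  generalize hD : 1 + ν * τ ^ 2 = d at hstat hd ⊢
  field_simp
  linear_combination (τ - 1) * d * hN - (τ - 2) * N * hD - (τ - 2) * τ * hstat - τ ^ 2 * d * hβ

section
variable {k : ℕ}

lemma cip_eq_inner (x y : Fin k → ℂ) :
    cip x y = inner ℂ (WithLp.toLp 2 x : EuclideanSpace ℂ (Fin k)) (WithLp.toLp 2 y) := by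
  simp [cip, PiLp.inner_apply, mul_comm]

lemma nsq_eq_norm_sq (x : Fin k → ℂ) :
    nsq x = ‖(WithLp.toLp 2 x : EuclideanSpace ℂ (Fin k))‖ ^ 2 := by
  simp [nsq, EuclideanSpace.norm_sq_eq]

lemma nsq_nonneg (x : Fin k → ℂ) : 0 ≤ nsq x := by
  rw [nsq_eq_norm_sq]
  positivity

lemma cip_self (x : Fin k → ℂ) : cip x x = nsq x := by
  rw [cip_eq_inner, nsq_eq_norm_sq, inner_self_eq_norm_sq_to_K]
  push_cast
  rfl

lemma cip_swap (x y : Fin k → ℂ) : cip y x = conj (cip x y) := by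
  rw [cip_eq_inner, cip_eq_inner, inner_conj_symm]

lemma cip_neg_right (x v : Fin k → ℂ) : cip x (-v) = -cip x v := by
  rw [cip_eq_inner, cip_eq_inner, WithLp.toLp_neg, inner_neg_right]

lemma nsq_add_ofReal_smul (x v : Fin k → ℂ) (t : ℝ) :
    nsq (x + (t : ℂ) • v) = nsq x + 2 * (cip x v).re * t + nsq v * t ^ 2 := by
  simp only [nsq_eq_norm_sq, cip_eq_inner, WithLp.toLp_add, WithLp.toLp_smul,
    norm_add_sq (𝕜 := ℂ), inner_smul_right, norm_smul, Complex.norm_real, Real.norm_eq_abs,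
    mul_pow, sq_abs, Complex.re_ofReal_mul, RCLike.re_to_complex]
  ring

lemma cip_eq_star_dotProduct (x y : Fin k → ℂ) : cip x y = star x ⬝ᵥ y := by
  simp [cip, dotProduct]

lemma cip_mulVec_mulVec {n : ℕ} (C : Matrix (Fin n) (Fin k) ℂ) (u v : Fin k → ℂ) :
    cip (C *ᵥ u) (C *ᵥ v) = cip u ((Cᴴ * C) *ᵥ v) := by
  rw [cip_eq_star_dotProduct, cip_eq_star_dotProduct, star_mulVec, dotProduct_mulVec,
    dotProduct_mulVec, vecMul_vecMul]

lemma cip_proj_self {y : Fin k → ℂ} (hy : nsq y = 1) (v : Fin k → ℂ) : cip y (proj y v) = 0 := by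
  rw [proj, cip_eq_inner, WithLp.toLp_sub, WithLp.toLp_smul, inner_sub_right, inner_smul_right,
    ← cip_eq_inner, ← cip_eq_inner, cip_self, hy]
  simp

lemma cip_proj_of_cip_eq_zero {x y : Fin k → ℂ} (hxy : cip x y = 0) (v : Fin k → ℂ) :
    cip x (proj y v) = cip x v := by
  rw [proj, cip_eq_inner, WithLp.toLp_sub, WithLp.toLp_smul, inner_sub_right, inner_smul_right,
    ← cip_eq_inner, ← cip_eq_inner, hxy]
  simp

lemma re_cip_mulVec_eq_neg_nsq {n : ℕ} {C : Matrix (Fin n) (Fin k) ℂ} {y w : Fin k → ℂ}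
    (hwy : cip w y = 0) (hnormal : proj y ((Cᴴ * C) *ᵥ w) = -proj y ((Cᴴ * C) *ᵥ y)) :
    (cip (C *ᵥ y) (C *ᵥ w)).re = -nsq (C *ᵥ w) := by
  have h := congrArg (cip w) hnormal
  rw [cip_neg_right, cip_proj_of_cip_eq_zero hwy, cip_proj_of_cip_eq_zero hwy,
    ← cip_mulVec_mulVec, ← cip_mulVec_mulVec, cip_self] at h
  rw [cip_swap, Complex.conj_re, ← neg_eq_iff_eq_neg.mpr h, Complex.neg_re, Complex.ofReal_re]

end

theorem stmt8_general {n k : ℕ} (A : Matrix (Fin n) (Fin n) ℂ) (V : Matrix (Fin n) (Fin k) ℂ)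
    (θ : ℂ) (y z : Fin k → ℂ)
    (hy : nsq y = 1)
    (M : Matrix (Fin k) (Fin k) ℂ)
    (hM : M = Vᴴ * (A - θ • 1)ᴴ * ((A - θ • 1) * V))
    (w : Fin k → ℂ) (hw : w = proj y z)
    (hne : proj y (M.mulVec w) = -(proj y (M.mulVec y)))
    (τ : ℝ) (s : Fin k → ℂ) (hs : s = y + (τ : ℂ) • w)
    (hmin : ∀ a b : ℂ, a • y + b • w ≠ 0 →
      nsq ((A - θ • 1).mulVec (V.mulVec s)) / nsq s
        ≤ nsq ((A - θ • 1).mulVec (V.mulVec (a • y + b • w))) / nsq (a • y + b • w))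
 :
    (τ - 1) * (nsq ((A - θ • 1).mulVec (V.mulVec y))
        - nsq ((A - θ • 1).mulVec (V.mulVec s)) / nsq s)
      = nsq ((A - θ • 1).mulVec (V.mulVec s)) * (1 - 1 / nsq s) := by
  set C := (A - θ • 1) * V
  have hC (u : Fin k → ℂ) : (A - θ • 1) *ᵥ (V *ᵥ u) = C *ᵥ u := mulVec_mulVec u _ _
  have hyw : cip y w = 0 := hw ▸ cip_proj_self hy z
  have hCC : M = Cᴴ * C := by rw [hM, conjTranspose_mul]
  have hβ := re_cip_mulVec_eq_neg_nsq (hwy := by rw [cip_swap, hyw, map_zero]) (hCC ▸ hne)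
  have hN (t : ℝ) : nsq (C *ᵥ (y + (t : ℂ) • w))
      = nsq (C *ᵥ y) + 2 * (cip (C *ᵥ y) (C *ᵥ w)).re * t + nsq (C *ᵥ w) * t ^ 2 := by
    rw [mulVec_add, mulVec_smul, nsq_add_ofReal_smul]
  have hD (t : ℝ) : nsq (y + (t : ℂ) • w) = 1 + nsq w * t ^ 2 := by
    rw [nsq_add_ofReal_smul, hyw, hy, Complex.zero_re]
    ring
  rw [hs, hC, hC, hN, hD]
  refine rayleigh_quotient_line_identity hβ (nsq_nonneg w) fun t => ?_
  have hpos : 0 < nsq ((1 : ℂ) • y + (t : ℂ) • w) := by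
    rw [one_smul, hD]
    have := nsq_nonneg w
    positivity
  have hne0 : (1 : ℂ) • y + (t : ℂ) • w ≠ 0 := fun h0 => by
    rw [h0] at hpos
    simp [nsq] at hpos
  simpa only [one_smul, hs, hC, hN, hD] using hmin 1 t hne0

theorem stmt8 {n k : ℕ} (A : Matrix (Fin n) (Fin n) ℂ) (V : Matrix (Fin n) (Fin k) ℂ)
    (θ : ℂ) (y z : Fin k → ℂ)
    (hV : Vᴴ * V = 1) (hy : nsq y = 1)
    (hRitz : (Vᴴ * ((A - θ • 1) * V)).mulVec y = 0)
    (M : Matrix (Fin k) (Fin k) ℂ)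
    (hM : M = Vᴴ * (A - θ • 1)ᴴ * ((A - θ • 1) * V))
    (w : Fin k → ℂ) (hw : w = proj y z)
    (hne : proj y (M.mulVec w) = -(proj y (M.mulVec y)))
    (τ : ℝ) (s : Fin k → ℂ) (hs : s = y + (τ : ℂ) • w)
    (hmin : ∀ a b : ℂ, a • y + b • w ≠ 0 →
      nsq ((A - θ • 1).mulVec (V.mulVec s)) / nsq s
        ≤ nsq ((A - θ • 1).mulVec (V.mulVec (a • y + b • w))) / nsq (a • y + b • w))
 :
    (τ - 1) * (nsq ((A - θ • 1).mulVec (V.mulVec y))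
        - nsq ((A - θ • 1).mulVec (V.mulVec s)) / nsq s)
      = nsq ((A - θ • 1).mulVec (V.mulVec s)) * (1 - 1 / nsq s) :=
  stmt8_general A V θ y z hy M hM w hw hne τ s hs hmin
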